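/- (Derivative bound for the asymptotic profile) For t > 0 and Schwartz u, the profile γ(t,v) = ∫ u(t,x) e^{−ix²/(4t)} conj(χ((x−vt)/√t)) dx satisfies ‖∂_v γ(t,·)‖_{L²_v} ≤ C ‖Lu(t,·)‖_{L²_x}, where Lu = xu + 2it∂ₓu and C depends only on χ. -/

import Mathlib

/-!
Substituting `x = vt + √t y` gives `γ(t,v) = √t ∫ (u e^{-iφ})(vt + √t y) conj χ(y) dy` with
`φ(x) = x²/(4t)`, and `∂ₓ(e^{-iφ} u) = -(i/2t) e^{-iφ} Lu`, so differentiating under the integral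
`|∂_v γ(t,v)| ≤ (√t/2) ∫ |Lu(vt + √t y)| |χ(y)| dy`. Cauchy–Schwarz against the weight `|χ|`,
Tonelli and `∫ |Lu(vt + c)|² dv = t⁻¹ ‖Lu‖²` then give `‖∂_v γ‖ ≤ (‖χ‖_{L¹}/2) ‖Lu‖`.
-/

open Complex MeasureTheory

/-- The asymptotic profile `γ(t,v) = ∫ u(x) e^{−ix²/(4t)} conj(χ((x−vt)/√t)) dx`. -/
noncomputable def asymProfile (χ : SchwartzMap ℝ ℂ) (u : ℝ → ℂ) (t v : ℝ) : ℂ :=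
  ∫ x : ℝ, u x * Complex.exp (-I * (x : ℂ) ^ 2 / (4 * (t : ℂ))) *
    (starRingEnd ℂ) (χ ((x - v * t) / Real.sqrt t))

open scoped ENNReal SchwartzMap ComplexConjugate

section LIntegral

variable {α : Type*} [MeasurableSpace α] {μ : Measure α}

theorem ENNReal.sq_lintegral_mul_le {f w : α → ℝ≥0∞} (hf : AEMeasurable f μ)
    (hw : AEMeasurable w μ) :
    (∫⁻ x, f x * w x ∂μ) ^ 2 ≤ (∫⁻ x, f x ^ 2 * w x ∂μ) * ∫⁻ x, w x ∂μ := by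
  have hsplit : ∀ x, (f x ^ 2 * w x) ^ (2⁻¹ : ℝ) * w x ^ (2⁻¹ : ℝ) = f x * w x := fun x => by
    rw [ENNReal.mul_rpow_of_nonneg _ _ (by norm_num), mul_assoc,
      ← ENNReal.rpow_add_of_nonneg _ _ (by norm_num) (by norm_num), ← ENNReal.rpow_natCast,
      ← ENNReal.rpow_mul]
    norm_num
  have hHolder := ENNReal.lintegral_mul_norm_pow_le ((hf.pow_const 2).mul hw) hw
    (p := 2⁻¹) (q := 2⁻¹) (by norm_num) (by norm_num) (by norm_num)
  simp only [Pi.mul_apply, hsplit] at hHolder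
  have hsq : ∀ a : ℝ≥0∞, (a ^ (2⁻¹ : ℝ)) ^ 2 = a := fun a => by
    simpa using ENNReal.rpow_inv_natCast_pow (x := a) two_ne_zero
  refine (pow_le_pow_left' hHolder 2).trans_eq ?_
  rw [mul_pow, hsq, hsq]

end LIntegral

theorem lintegral_comp_mul_add {t : ℝ} (ht : t ≠ 0) (c : ℝ) (f : ℝ → ℝ≥0∞) :
    ∫⁻ v, f (v * t + c) = ENNReal.ofReal |t⁻¹| * ∫⁻ x, f x := by
  rw [← lintegral_add_right_eq_self f c, ← smul_eq_mul, ← lintegral_smul_measure,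
    ← Real.map_volume_mul_right ht]
  exact (lintegral_map_equiv (fun x => f (x + c)) (MeasurableEquiv.mulRight₀ t ht)).symm

theorem lintegral_sq_lintegral_comp_mul_add_le {t : ℝ} (ht : 0 < t) (s : ℝ) {G W : ℝ → ℝ≥0∞}
    (hG : Measurable G) (hW : Measurable W) :
    ∫⁻ v, (∫⁻ y, G (v * t + s * y) * W y) ^ 2 ≤
      ENNReal.ofReal t⁻¹ * (∫⁻ y, W y) ^ 2 * ∫⁻ x, G x ^ 2 := by
  have hK : Measurable (Function.uncurry fun v y => G (v * t + s * y) ^ 2 * W y) := by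
    fun_prop
  calc ∫⁻ v, (∫⁻ y, G (v * t + s * y) * W y) ^ 2
      ≤ ∫⁻ v, (∫⁻ y, G (v * t + s * y) ^ 2 * W y) * ∫⁻ y, W y :=
        lintegral_mono fun v => ENNReal.sq_lintegral_mul_le (by fun_prop) hW.aemeasurable
    _ = (∫⁻ y, (∫⁻ v, G (v * t + s * y) ^ 2) * W y) * ∫⁻ y, W y := by
        have hm : Measurable fun v => ∫⁻ y, G (v * t + s * y) ^ 2 * W y :=
          hK.lintegral_prod_right'
        rw [lintegral_mul_const _ hm, lintegral_lintegral_swap hK.aemeasurable]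
        congr 1
        exact lintegral_congr fun y => lintegral_mul_const _ (by fun_prop)
    _ = ENNReal.ofReal t⁻¹ * (∫⁻ y, W y) ^ 2 * ∫⁻ x, G x ^ 2 := by
        simp_rw [lintegral_comp_mul_add ht.ne' _ fun x => G x ^ 2, abs_of_pos (inv_pos.2 ht)]
        rw [lintegral_const_mul _ hW]
        ring

section L2

variable {α E F : Type*} [MeasurableSpace α] {μ : Measure α} [NormedAddCommGroup E]
  [NormedAddCommGroup F]

theorem integral_norm_sq_eq_toReal_lintegral {f : α → E} (hf : AEStronglyMeasurable f μ) :
    ∫ x, ‖f x‖ ^ 2 ∂μ = (∫⁻ x, ‖f x‖ₑ ^ 2 ∂μ).toReal := by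
  have hf2 : AEStronglyMeasurable (fun x => ‖f x‖ ^ 2) μ := hf.norm.pow 2
  rw [integral_eq_lintegral_of_nonneg_ae (.of_forall fun x => by positivity) hf2]
  simp_rw [ENNReal.ofReal_pow (norm_nonneg _), ofReal_norm]

theorem rpow_half_integral_norm_sq_le_of_lintegral_le {f : α → E} {g : α → F}
    (hf : AEStronglyMeasurable f μ) (hg : MemLp g 2 μ) {c : ℝ} (hc : 0 ≤ c)
    (h : ∫⁻ x, ‖f x‖ₑ ^ 2 ∂μ ≤ ENNReal.ofReal (c ^ 2) * ∫⁻ x, ‖g x‖ₑ ^ 2 ∂μ) :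
    (∫ x, ‖f x‖ ^ 2 ∂μ) ^ ((1 : ℝ) / 2) ≤ c * (∫ x, ‖g x‖ ^ 2 ∂μ) ^ ((1 : ℝ) / 2) := by
  have hg_fin : ∫⁻ x, ‖g x‖ₑ ^ 2 ∂μ ≠ ⊤ := by
    simpa [enorm_pow] using (hg.integrable_norm_pow (p := 2) two_ne_zero).2.ne
  rw [integral_norm_sq_eq_toReal_lintegral hf, integral_norm_sq_eq_toReal_lintegral hg.1,
    ← Real.sqrt_eq_rpow, ← Real.sqrt_eq_rpow, ← Real.sqrt_sq hc, ← Real.sqrt_mul (sq_nonneg c)]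
  refine Real.sqrt_le_sqrt ?_
  simpa [ENNReal.toReal_mul, sq_nonneg] using ENNReal.toReal_mono (by finiteness) h

end L2

theorem hasDerivAt_integral_comp_mul_add {f f' g : ℝ → ℂ} {M M' : ℝ}
    (hf : ∀ x, HasDerivAt f (f' x) x) (hf' : Continuous f') (hfM : ∀ x, ‖f x‖ ≤ M)
    (hf'M : ∀ x, ‖f' x‖ ≤ M') (hg : Integrable g) (a c v : ℝ) :
    HasDerivAt (fun w => ∫ y, f (w * a + c * y) * g y)
      (∫ y, a • f' (v * a + c * y) * g y) v := by
  have hfc : Continuous f := continuous_iff_continuousAt.2 fun x => (hf x).continuousAt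
  refine (hasDerivAt_integral_of_dominated_loc_of_deriv_le
    (F := fun w y => f (w * a + c * y) * g y) (F' := fun w y => a • f' (w * a + c * y) * g y)
    (bound := fun y => ‖a‖ * M' * ‖g y‖)
    (Metric.ball_mem_nhds v one_pos) ?_ ?_ ?_ ?_ ?_ ?_).2
  · exact .of_forall fun w => ((hfc.comp (by fun_prop)).aestronglyMeasurable).mul hg.1
  · refine (hg.norm.const_mul M).mono'
      (((hfc.comp (by fun_prop)).aestronglyMeasurable).mul hg.1) (.of_forall fun y => ?_)
    rw [norm_mul]
    exact mul_le_mul_of_nonneg_right (hfM _) (norm_nonneg _)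
  · exact (((hf'.comp (by fun_prop)).const_smul a).aestronglyMeasurable).mul hg.1
  · refine .of_forall fun y w _ => ?_
    rw [norm_mul, norm_smul]
    exact mul_le_mul_of_nonneg_right (mul_le_mul_of_nonneg_left (hf'M _) (norm_nonneg _))
      (norm_nonneg _)
  · exact (hg.norm.const_mul M').const_mul ‖a‖ |>.congr (.of_forall fun y => by simp [mul_assoc])
  · exact .of_forall fun y w _ =>
      ((hf _).scomp w ((hasDerivAt_mul_const a).add_const _)).mul_const _

noncomputable def chirp (t x : ℝ) : ℂ := exp (-I * (x : ℂ) ^ 2 / (4 * (t : ℂ)))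

theorem norm_chirp (t x : ℝ) : ‖chirp t x‖ = 1 := by
  have h : -I * (x : ℂ) ^ 2 / (4 * (t : ℂ)) = ((-(x ^ 2 / (4 * t)) : ℝ) : ℂ) * I := by
    push_cast; ring
  rw [chirp, h, norm_exp_ofReal_mul_I]

theorem enorm_chirp (t x : ℝ) : ‖chirp t x‖ₑ = 1 := by
  rw [← enorm_norm, norm_chirp, enorm_one]

@[fun_prop]
theorem continuous_chirp (t : ℝ) : Continuous (chirp t) := by
  unfold chirp; fun_prop

theorem HasDerivAt.mul_chirp {u : ℝ → ℂ} {u' : ℂ} {t x : ℝ} (ht : t ≠ 0)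
    (hu : HasDerivAt u u' x) :
    HasDerivAt (fun x => u x * chirp t x)
      (-(I / (2 * t)) * chirp t x * (x * u x + 2 * I * t * u')) x := by
  have hphase : HasDerivAt (fun z : ℂ => -I * z ^ 2 / (4 * t)) (-I * (2 * x) / (4 * t)) x := by
    simpa using ((hasDerivAt_pow 2 (x : ℂ)).const_mul (-I)).div_const (4 * (t : ℂ))
  have hchirp : HasDerivAt (chirp t) (chirp t x * (-I * (2 * x) / (4 * t))) x :=
    hphase.cexp.comp_ofReal
  refine (hu.mul hchirp).congr_deriv ?_
  have htC : (t : ℂ) ≠ 0 := by exact_mod_cast ht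
  field_simp
  linear_combination (8 * t * u' * chirp t x) * I_sq

noncomputable def galileanOp (t : ℝ) : 𝓢(ℝ, ℂ) →L[ℂ] 𝓢(ℝ, ℂ) :=
  SchwartzMap.smulLeftCLM ℂ (fun x : ℝ => (x : ℂ)) + (2 * I * t) • SchwartzMap.derivCLM ℂ ℂ

theorem galileanOp_apply (t : ℝ) (u : 𝓢(ℝ, ℂ)) (x : ℝ) :
    galileanOp t u x = x * u x + 2 * I * t * deriv u x := by
  simp [galileanOp, SchwartzMap.derivCLM_apply, SchwartzMap.smulLeftCLM_apply_apply
    (by fun_prop : Function.HasTemperateGrowth (fun x : ℝ => (x : ℂ)))]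

theorem asymProfile_eq_smul_integral (χ : 𝓢(ℝ, ℂ)) (u : ℝ → ℂ) {t : ℝ} (ht : 0 < t) (w : ℝ) :
    asymProfile χ u t w =
      √t • ∫ y, u (w * t + √t * y) * chirp t (w * t + √t * y) * conj (χ y) := by
  have hs : 0 < √t := Real.sqrt_pos.2 ht
  set f : ℝ → ℂ := fun x => u x * chirp t x * conj (χ ((x - w * t) / √t))
  have hf : ∀ y, u (w * t + √t * y) * chirp t (w * t + √t * y) * conj (χ y) =
      f (√t * y + w * t) := fun y => by
    simp only [f]
    rw [show (√t * y + w * t - w * t) / √t = y by field_simp; ring]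
    ring_nf
  simp_rw [hf]
  rw [Measure.integral_comp_mul_left (fun z => f (z + w * t)), integral_add_right_eq_self f,
    smul_smul, abs_of_pos (inv_pos.2 hs), mul_inv_cancel₀ hs.ne', one_smul]
  rfl

theorem hasDerivAt_asymProfile (χ u : 𝓢(ℝ, ℂ)) {t : ℝ} (ht : 0 < t) (v : ℝ) :
    HasDerivAt (asymProfile χ u t)
      (√t • ∫ y, -(I / 2) * chirp t (v * t + √t * y) * galileanOp t u (v * t + √t * y) *
        conj (χ y)) v := by
  have hF : ∀ x, HasDerivAt (fun x => u x * chirp t x)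
      (-(I / (2 * t)) * chirp t x * galileanOp t u x) x := fun x => by
    simpa only [galileanOp_apply] using u.differentiableAt.hasDerivAt.mul_chirp ht.ne'
  have hmain := hasDerivAt_integral_comp_mul_add hF (by fun_prop)
    (fun x => by rw [norm_mul, norm_chirp, mul_one]; exact u.norm_le_seminorm ℝ x)
    (fun x => by
      rw [norm_mul, norm_mul, norm_chirp, mul_one]
      exact mul_le_mul_of_nonneg_left ((galileanOp t u).norm_le_seminorm ℝ x) (norm_nonneg _))
    (Complex.conjCLE.toContinuousLinearMap.integrable_comp χ.integrable) t √t v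
  rw [funext (asymProfile_eq_smul_integral χ u ht)]
  refine (hmain.const_smul √t).congr_deriv ?_
  congr 1
  refine integral_congr_ae (.of_forall fun y => ?_)
  have htC : (t : ℂ) ≠ 0 := by exact_mod_cast ht.ne'
  simp only [Complex.real_smul]
  field_simp
  rfl

theorem enorm_deriv_asymProfile_le (χ u : 𝓢(ℝ, ℂ)) {t : ℝ} (ht : 0 < t) (v : ℝ) :
    ‖deriv (asymProfile χ u t) v‖ₑ ≤
      ENNReal.ofReal (√t / 2) * ∫⁻ y, ‖galileanOp t u (v * t + √t * y)‖ₑ * ‖χ y‖ₑ := by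
  have henorm : ∀ x y, ‖-(I / 2) * chirp t x * galileanOp t u x * conj (χ y)‖ₑ =
      2⁻¹ * (‖galileanOp t u x‖ₑ * ‖χ y‖ₑ) := fun x y => by
    rw [enorm_mul, enorm_mul, enorm_mul, enorm_chirp, RCLike.enorm_conj, mul_one, mul_assoc,
      show ‖-(I / 2)‖ₑ = 2⁻¹ by simp [← ofReal_norm]]
  calc ‖deriv (asymProfile χ u t) v‖ₑ
      = ‖√t‖ₑ * ‖∫ y, -(I / 2) * chirp t (v * t + √t * y) * galileanOp t u (v * t + √t * y) *
          conj (χ y)‖ₑ := by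
        rw [(hasDerivAt_asymProfile χ u ht v).deriv, enorm_smul]
    _ ≤ ‖√t‖ₑ * ∫⁻ y, 2⁻¹ * (‖galileanOp t u (v * t + √t * y)‖ₑ * ‖χ y‖ₑ) := by
        gcongr
        exact (enorm_integral_le_lintegral_enorm _).trans_eq (lintegral_congr fun y => henorm _ _)
    _ = _ := by
        rw [lintegral_const_mul' _ _ (by simp), ← mul_assoc,
          Real.enorm_of_nonneg (Real.sqrt_nonneg t), ENNReal.ofReal_div_of_pos two_pos,
          ENNReal.ofReal_ofNat, div_eq_mul_inv]

theorem lintegral_enorm_deriv_asymProfile_sq_le (χ u : 𝓢(ℝ, ℂ)) {t : ℝ} (ht : 0 < t) :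
    ∫⁻ v, ‖deriv (asymProfile χ u t) v‖ₑ ^ 2 ≤
      ENNReal.ofReal (((∫ y, ‖χ y‖) / 2) ^ 2) * ∫⁻ x, ‖galileanOp t u x‖ₑ ^ 2 := by
  set N := ∫ y, ‖χ y‖
  have hχN : ∫⁻ y, ‖χ y‖ₑ = ENNReal.ofReal N :=
    (ofReal_integral_norm_eq_lintegral_enorm χ.integrable).symm
  calc ∫⁻ v, ‖deriv (asymProfile χ u t) v‖ₑ ^ 2
      ≤ ∫⁻ v, ENNReal.ofReal (t / 4) *
          (∫⁻ y, ‖galileanOp t u (v * t + √t * y)‖ₑ * ‖χ y‖ₑ) ^ 2 := by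
        refine lintegral_mono fun v =>
          (pow_le_pow_left' (enorm_deriv_asymProfile_le χ u ht v) 2).trans_eq ?_
        rw [mul_pow, ← ENNReal.ofReal_pow (by positivity), div_pow, Real.sq_sqrt ht.le]
        norm_num
    _ ≤ ENNReal.ofReal (t / 4) * (ENNReal.ofReal t⁻¹ * ENNReal.ofReal N ^ 2 *
          ∫⁻ x, ‖galileanOp t u x‖ₑ ^ 2) := by
        rw [lintegral_const_mul' _ _ ENNReal.ofReal_ne_top, ← hχN]
        gcongr
        exact lintegral_sq_lintegral_comp_mul_add_le ht _ (by fun_prop) (by fun_prop)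
    _ = ENNReal.ofReal ((N / 2) ^ 2) * ∫⁻ x, ‖galileanOp t u x‖ₑ ^ 2 := by
        have hN : 0 ≤ N := integral_nonneg fun y => norm_nonneg _
        rw [← mul_assoc, ← mul_assoc, ← ENNReal.ofReal_pow hN,
          ← ENNReal.ofReal_mul (by positivity), ← ENNReal.ofReal_mul (by positivity)]
        congr 2
        field_simp
        ring

/-- Derivative bound for the asymptotic profile:
`‖∂_v γ(t,·)‖_{L²_v} ≤ C ‖Lu‖_{L²_x}` with `Lu = xu + 2it∂ₓu`,
`C` depending only on `χ`. -/
theorem gamma_deriv_L2_bound (χ : SchwartzMap ℝ ℂ) (hχ : (∫ y : ℝ, χ y) = 1) :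
    ∃ C : ℝ, 0 < C ∧ ∀ (t : ℝ), 0 < t → ∀ u : SchwartzMap ℝ ℂ,
      (∫ v : ℝ, ‖deriv (fun w : ℝ => asymProfile χ (fun x => u x) t w) v‖ ^ 2) ^ ((1 : ℝ) / 2) ≤
        C * (∫ x : ℝ, ‖(x : ℂ) * u x + 2 * I * (t : ℂ) * deriv u x‖ ^ 2) ^ ((1 : ℝ) / 2) := by
  have hN : 1 ≤ ∫ y, ‖χ y‖ := by
    simpa [hχ] using norm_integral_le_integral_norm (μ := volume) (χ : ℝ → ℂ)
  refine ⟨(∫ y, ‖χ y‖) / 2, by positivity, fun t ht u => ?_⟩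
  simp_rw [← galileanOp_apply]
  exact rpow_half_integral_norm_sq_le_of_lintegral_le (c := (∫ y, ‖χ y‖) / 2)
    (measurable_deriv (asymProfile χ u t)).aestronglyMeasurable ((galileanOp t u).memLp 2)
    (by positivity) (lintegral_enorm_deriv_asymProfile_sq_le χ u ht)
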